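/- arXiv:1207.1342 — 3 statements merged into one kernel-verified Lean document; each statement's English description precedes it below -/
import Mathlib

section
/- Let Ω ⊂ ℝⁿ be a bounded open convex set, o ∈ Ω a point such that the Euclidean ball B(o,1/n) is contained in Ω and Ω is contained in the Euclidean unit ball B(o,1), and let R > 0. Then: (1) every point x ∈ ℝⁿ whose Euclidean distance to the asymptotic ball AsB(o,R) is at most (1 − tanh R)/(2n) belongs to Ω and is at Hilbert distance at most (ln 3)/2 from AsB(o,R); (2) every point of Ω (in particular every point at any Hilbert distance K > 0 from AsB(o,R)) is at Euclidean distance at most 1 − tanh R from AsB(o,R). -/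
/-!
Write `τ = tanh R`, so that `AsB(o, R) = (1 - τ) o + τ Ω`. By convexity every point of the closure
of `AsB(o, R)` is the centre of a Euclidean ball of radius `(1 - τ)/n` inside `Ω`. If `x` is closer
than half that radius to a point `y` of `AsB(o, R)`, the chord through `y` and `x` extends at least
twice `|x - y|` beyond `y` on both sides, and the cross ratio is at most `3`.

Otherwise the distance `(1 - τ)/(2n)` is attained only at the nearest point `y₀` of the closure,
where this bound is exactly `3` and does not survive moving to nearby points. But `x - y₀` is an
outer normal at `y₀` of a convex set containing `B(o, τ/n)`, so the chord has strictly more room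
behind `y₀`, which leaves slack to move to a point of `AsB(o, R)` itself.
-/

open Filter MeasureTheory Metric Set

noncomputable section
open scoped Classical

abbrev Euc (n : ℕ) := EuclideanSpace ℝ (Fin n)

variable {n : ℕ}

/-- Parameters `t` such that `p + t • (q - p)` lies in `Ω`. For a bounded open convex `Ω`
containing `p` and `q`, this is an open interval `(t⁻, t⁺)` with `t⁻ < 0 < 1 < t⁺`, and the
two boundary points of the chord through `p`, `q` are obtained at `sInf` and `sSup`. -/
def lineParams (Ω : Set (Euc n)) (p q : Euc n) : Set ℝ := {t : ℝ | p + t • (q - p) ∈ Ω}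

/-- The Hilbert distance of `Ω`. -/
noncomputable def hilbertDist (Ω : Set (Euc n)) (p q : Euc n) : ℝ :=
  if p = q then 0 else
    (1 / 2) * Real.log
      (((1 - sInf (lineParams Ω p q)) / (-(sInf (lineParams Ω p q)))) *
        (sSup (lineParams Ω p q) / (sSup (lineParams Ω p q) - 1)))

/-- The Hilbert metric ball `B_Ω(p, r) = {x ∈ Ω : d_Ω(p,x) ≤ r}`. -/
def hilbertBall (Ω : Set (Euc n)) (p : Euc n) (r : ℝ) : Set (Euc n) :=
  {x ∈ Ω | hilbertDist Ω p x ≤ r}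

/-- The Finsler norm `F_Ω(p, v) = (1/2)(1/t⁺ + 1/t⁻)`. -/
noncomputable def finslerF (Ω : Set (Euc n)) (p v : Euc n) : ℝ :=
  if v = 0 then 0 else
    (1 / 2) * (1 / sSup {t : ℝ | p + t • v ∈ Ω} + 1 / (-(sInf {t : ℝ | p + t • v ∈ Ω})))

/-- The Busemann volume of `A ⊆ Ω`. -/
noncomputable def busemannVol (Ω A : Set (Euc n)) : ℝ :=
  (∫⁻ p in A, volume (Metric.ball (0 : Euc n) 1) /
      volume {v : Euc n | finslerF Ω p v < 1}).toReal

/-- The volume entropy of `Ω` with basepoint `p`. -/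
noncomputable def hilbertEntropy (Ω : Set (Euc n)) (p : Euc n) : ℝ :=
  liminf (fun r : ℝ => Real.log (busemannVol Ω (hilbertBall Ω p r)) / r) atTop

/-- `N(ε, Ω)`: the smallest cardinality of a finite set of points whose convex hull is at
Hausdorff distance at most `ε` from the closure of `Ω`. -/
noncomputable def approxN (Ω : Set (Euc n)) (ε : ℝ) : ℕ :=
  sInf {N : ℕ | ∃ S : Finset (Euc n), S.card = N ∧
    Metric.hausdorffDist (convexHull ℝ (S : Set (Euc n))) (closure Ω) ≤ ε}

/-- The approximability `a(Ω) = liminf_{ε→0⁺} ln N(ε,Ω) / (−ln ε)`. -/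
noncomputable def approximability (Ω : Set (Euc n)) : ℝ :=
  liminf (fun ε : ℝ => Real.log (approxN Ω ε) / (-Real.log ε)) (nhdsWithin 0 (Set.Ioi 0))

/-- The polytopal dimension `PD(Ω) = 2 a(Ω)`. -/
noncomputable def polytopalDim (Ω : Set (Euc n)) : ℝ := 2 * approximability Ω

/-- The asymptotic ball `AsB(o, R)`: image of `Ω` under the dilation of ratio `tanh R`
centred at `o`. -/
def asymptoticBall (Ω : Set (Euc n)) (o : Euc n) (R : ℝ) : Set (Euc n) :=
  (fun x => o + Real.tanh R • (x - o)) '' Ω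

/-- The critical exponent of a subset `G ⊆ Ω` with basepoint `x₀`. -/
noncomputable def critExp (Ω G : Set (Euc n)) (x₀ : Euc n) : ℝ :=
  sInf {s : ℝ | 0 < s ∧
    Summable (fun γ : G => Real.exp (-s * hilbertDist Ω (γ : Euc n) x₀))}

end

open scoped InnerProductSpace

theorem Real.tanh_pos_of_pos {x : ℝ} (hx : 0 < x) : 0 < Real.tanh x := by
  rw [Real.tanh_eq_sinh_div_cosh]
  exact div_pos (Real.sinh_pos_iff.mpr hx) (Real.cosh_pos x)

section Convex

variable {E : Type*} [NormedAddCommGroup E] [NormedSpace ℝ E] {s : Set E} {o w : E} {r t : ℝ}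

theorem Convex.ball_add_smul_sub_subset (hs : Convex ℝ s) (ho : ball o r ⊆ s)
    (hw : w ∈ closure s) (ht₀ : 0 ≤ t) (ht₁ : t < 1) :
    ball (o + t • (w - o)) ((1 - t) * r) ⊆ s := by
  intro z hz
  have h1t : 0 < 1 - t := by linarith
  set p := o + (1 - t)⁻¹ • (z - (o + t • (w - o)))
  have hp : p ∈ interior s := by
    refine interior_maximal ho isOpen_ball ?_
    rw [mem_ball, dist_eq_norm, add_sub_cancel_left, norm_smul, Real.norm_eq_abs,
      abs_inv, abs_of_pos h1t, inv_mul_lt_iff₀ h1t, ← dist_eq_norm]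
    exact hz
  have hz : z = w + (1 - t) • (p - w) := by
    rw [smul_sub, smul_add, smul_smul, mul_inv_cancel₀ h1t.ne', one_smul]
    module
  rw [hz]
  exact interior_subset (hs.add_smul_sub_mem_interior' hw hp ⟨h1t, by linarith⟩)

end Convex

section Inner

variable {F : Type*} [NormedAddCommGroup F] [InnerProductSpace ℝ F]

theorem mul_norm_le_inner_of_forall_closedBall {v y c : F} {ρ : ℝ} (hρ : 0 ≤ ρ)
    (h : ∀ z ∈ closedBall c ρ, ⟪v, z - y⟫_ℝ ≤ 0) : ρ * ‖v‖ ≤ ⟪v, y - c⟫_ℝ := by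
  rcases eq_or_ne v 0 with rfl | hv
  · simp
  have hv' : 0 < ‖v‖ := norm_pos_iff.mpr hv
  have hz : c + (ρ / ‖v‖) • v ∈ closedBall c ρ := by
    rw [mem_closedBall, dist_eq_norm, add_sub_cancel_left, norm_smul, Real.norm_eq_abs,
      abs_of_nonneg (by positivity), div_mul_cancel₀ _ hv'.ne']
  have := h _ hz
  rw [show c + (ρ / ‖v‖) • v - y = (ρ / ‖v‖) • v - (y - c) by abel, inner_sub_right,
    real_inner_smul_right, real_inner_self_eq_norm_sq] at this
  have hsq : ρ / ‖v‖ * ‖v‖ ^ 2 = ρ * ‖v‖ := by field_simp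
  linarith

theorem exists_norm_eq_infDist_and_mul_norm_le_inner {K : Set F} (hKc : IsComplete K)
    (hK : Convex ℝ K) {c : F} {ρ : ℝ} (hρ : 0 ≤ ρ) (hcK : closedBall c ρ ⊆ K) (x : F) :
    ∃ y ∈ K, ‖x - y‖ = infDist x K ∧ ρ * ‖x - y‖ ≤ ⟪x - y, y - c⟫_ℝ := by
  obtain ⟨y, hy, hmin⟩ := exists_norm_eq_iInf_of_complete_convex
    ⟨c, hcK (mem_closedBall_self hρ)⟩ hKc hK x
  refine ⟨y, hy, ?_, mul_norm_le_inner_of_forall_closedBall hρ fun z hz =>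
    (norm_eq_iInf_iff_real_inner_le_zero hK hy).mp hmin z (hcK hz)⟩
  rw [hmin, infDist_eq_iInf]
  simp only [dist_eq_norm]

variable {s : Set F} {o w u : F} {r t : ℝ}

/-- The point lies in the ball of radius `L = (1 - t + κ) r` about `o + (t - κ) • (w - o)`, which
is inside `s`: as `⟪u, w - o⟫ ≥ r`, moving the centre by `κ • (w - o)` gains `κ r` in the
direction `-u` at a cost of order `κ²`. -/
theorem Convex.exists_lt_sub_smul_mem (hs : Convex ℝ s) (ho : ball o r ⊆ s)
    (hw : w ∈ closure s) (hr : 0 < r) (ht₀ : 0 < t) (ht₁ : t < 1) (hu : ‖u‖ = 1)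
    (hwu : r ≤ ⟪u, w - o⟫_ℝ) : ∃ L > (1 - t) * r, o + t • (w - o) - L • u ∈ s := by
  set D := ‖w - o‖ ^ 2
  set κ := min t ((1 - t) * r ^ 2 / (D + 1))
  have hκ : 0 < κ := lt_min ht₀ (by positivity)
  set L := (1 - (t - κ)) * r
  have hL : (1 - t) * r < L := by simp only [L]; nlinarith
  have hL₀ : 0 < L := lt_of_le_of_lt (by nlinarith) hL
  have hκt : κ ≤ t := min_le_left _ _
  refine ⟨L, hL, hs.ball_add_smul_sub_subset (t := t - κ) ho hw (by linarith) (by linarith) ?_⟩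
  have hκD : κ * D < 2 * L * r := by
    have h1 : κ * D ≤ (1 - t) * r ^ 2 / (D + 1) * D :=
      mul_le_mul_of_nonneg_right (min_le_right _ _) (by positivity)
    have h2 : (1 - t) * r ^ 2 / (D + 1) * D < (1 - t) * r ^ 2 := by
      rw [div_mul_eq_mul_div, div_lt_iff₀ (by positivity)]
      nlinarith [mul_pos (sub_pos.2 ht₁) (pow_pos hr 2)]
    nlinarith
  have hsq : ‖κ • (w - o) - L • u‖ ^ 2 < L ^ 2 := by
    rw [norm_sub_sq_real, norm_smul, norm_smul, hu, real_inner_smul_left, real_inner_smul_right,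
      real_inner_comm, Real.norm_eq_abs, Real.norm_eq_abs, abs_of_pos hκ, abs_of_pos hL₀]
    nlinarith [mul_le_mul_of_nonneg_left hwu (by positivity : 0 ≤ 2 * κ * L)]
  rw [mem_ball, dist_eq_norm, show o + t • (w - o) - L • u - (o + (t - κ) • (w - o))
    = κ • (w - o) - L • u by module]
  exact lt_of_pow_lt_pow_left₀ 2 hL₀.le hsq

end Inner

section Hilbert

variable {n : ℕ} {Ω : Set (Euc n)} {p q : Euc n} {α β : ℝ}

theorem Bornology.IsBounded.lineParams (hΩ : Bornology.IsBounded Ω) (hpq : p ≠ q) :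
    Bornology.IsBounded (lineParams Ω p q) := by
  obtain ⟨C, hC⟩ := hΩ.exists_norm_le
  have hqp : 0 < ‖q - p‖ := norm_pos_iff.mpr (sub_ne_zero.mpr hpq.symm)
  refine isBounded_iff_forall_norm_le.mpr ⟨(C + ‖p‖) / ‖q - p‖, fun t ht => ?_⟩
  rw [le_div_iff₀ hqp, ← norm_smul]
  calc ‖t • (q - p)‖ = ‖(p + t • (q - p)) - p‖ := by rw [add_sub_cancel_left]
    _ ≤ ‖p + t • (q - p)‖ + ‖p‖ := norm_sub_le _ _
    _ ≤ C + ‖p‖ := by gcongr; exact hC _ ht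

theorem hilbertDist_le_of_mem_chord (hΩ : Bornology.IsBounded Ω) (hα : 0 < α) (hβ : 1 < β)
    (hback : p - α • (q - p) ∈ Ω) (hfwd : p + β • (q - p) ∈ Ω) :
    hilbertDist Ω p q ≤ 1 / 2 * Real.log ((α + 1) / α * (β / (β - 1))) := by
  have hαβ : 1 ≤ (α + 1) / α * (β / (β - 1)) :=
    one_le_mul_of_one_le_of_one_le ((one_le_div hα).mpr (by linarith))
      ((one_le_div (by linarith)).mpr (by linarith))
  rw [hilbertDist]
  split_ifs with hpq
  · have := Real.log_nonneg hαβ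
    positivity
  have hS := hΩ.lineParams hpq
  have ha : sInf (lineParams Ω p q) ≤ -α :=
    csInf_le hS.bddBelow (by rwa [lineParams, mem_ofPred_eq, neg_smul, ← sub_eq_add_neg])
  have hb : β ≤ sSup (lineParams Ω p q) := le_csSup hS.bddAbove hfwd
  set a := sInf (lineParams Ω p q)
  set b := sSup (lineParams Ω p q)
  have hback' : (1 - a) / -a ≤ (α + 1) / α := by
    rw [div_le_div_iff₀ (by linarith) hα]; nlinarith
  have hfwd' : b / (b - 1) ≤ β / (β - 1) := by
    rw [div_le_div_iff₀ (by linarith) (by linarith)]; nlinarith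
  have hpos : 0 < (1 - a) / -a * (b / (b - 1)) :=
    mul_pos (div_pos (by linarith) (by linarith)) (div_pos (by linarith) (by linarith))
  have := Real.log_le_log hpos
    (mul_le_mul hback' hfwd' (div_nonneg (by linarith) (by linarith)) (by positivity))
  linarith

theorem exists_hilbertDist_le_of_mem_closure {A : Set (Euc n)} (hΩo : IsOpen Ω)
    (hΩ : Bornology.IsBounded Ω) (hα : 0 < α) (hβ : 1 < β) {y x : Euc n} (hy : y ∈ closure A)
    (hback : y - α • (x - y) ∈ Ω) (hfwd : y + β • (x - y) ∈ Ω) :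
    ∃ y' ∈ A, hilbertDist Ω y' x ≤ 1 / 2 * Real.log ((α + 1) / α * (β / (β - 1))) := by
  have hU : IsOpen {z | z - α • (x - z) ∈ Ω ∧ z + β • (x - z) ∈ Ω} :=
    (hΩo.preimage (by fun_prop)).inter (hΩo.preimage (by fun_prop))
  obtain ⟨y', hy'U, hy'A⟩ := mem_closure_iff.mp hy _ hU ⟨hback, hfwd⟩
  exact ⟨y', hy'A, hilbertDist_le_of_mem_chord hΩ hα hβ hy'U.1 hy'U.2⟩

end Hilbert

theorem cross_ratio_eq_three {L δ : ℝ} (hδ : 0 < δ) (hL : 2 * δ < L) :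
    (L / δ + 1) / (L / δ) * (3 * L / (2 * L - δ) / (3 * L / (2 * L - δ) - 1)) = 3 := by
  have h2L : 2 * L - δ ≠ 0 := by linarith
  have hLδ : L + δ ≠ 0 := by linarith
  have hL₀ : L ≠ 0 := by linarith
  rw [div_sub_one h2L, div_div_div_cancel_right₀ h2L, show 3 * L - (2 * L - δ) = L + δ by ring]
  field_simp

section AsymptoticBall

variable {n : ℕ} {Ω : Set (Euc n)} {o x : Euc n} {R r : ℝ}

theorem asymptoticBall_eq_image_homothety :
    asymptoticBall Ω o R = AffineMap.homothety o (Real.tanh R) '' Ω := by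
  rw [asymptoticBall]
  congr 1
  funext w
  rw [AffineMap.homothety_apply, vsub_eq_sub, vadd_eq_add, add_comm]

theorem Convex.asymptoticBall (hΩ : Convex ℝ Ω) : Convex ℝ (asymptoticBall Ω o R) := by
  rw [asymptoticBall_eq_image_homothety]
  exact hΩ.affine_image _

theorem ball_subset_asymptoticBall (hR : 0 < R) (hr : ball o r ⊆ Ω) :
    ball o (Real.tanh R * r) ⊆ asymptoticBall Ω o R := by
  have hτ := Real.tanh_pos_of_pos hR
  intro z hz
  refine ⟨o + (Real.tanh R)⁻¹ • (z - o), hr ?_, ?_⟩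
  · rw [mem_ball, dist_eq_norm, add_sub_cancel_left, norm_smul, norm_inv, Real.norm_eq_abs,
      abs_of_pos hτ, inv_mul_lt_iff₀ hτ, ← dist_eq_norm]
    exact hz
  · simp only [add_sub_cancel_left, smul_smul, mul_inv_cancel₀ hτ.ne', one_smul, add_sub_cancel]

theorem closure_asymptoticBall_subset (hR : 0 < R) :
    closure (asymptoticBall Ω o R) ⊆ asymptoticBall (closure Ω) o R := by
  have hτ := (Real.tanh_pos_of_pos hR).ne'
  intro y hy
  refine ⟨o + (Real.tanh R)⁻¹ • (y - o),
    map_mem_closure (f := fun z => o + (Real.tanh R)⁻¹ • (z - o)) (by fun_prop) hy ?_, ?_⟩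
  · rintro _ ⟨w, hw, rfl⟩
    simpa only [add_sub_cancel_left, smul_smul, inv_mul_cancel₀ hτ, one_smul, add_sub_cancel]
      using hw
  · simp only [add_sub_cancel_left, smul_smul, mul_inv_cancel₀ hτ, one_smul, add_sub_cancel]

theorem ball_subset_of_mem_asymptoticBall_closure (hΩ : Convex ℝ Ω) (hR : 0 < R)
    (hr : ball o r ⊆ Ω) {y : Euc n} (hy : y ∈ asymptoticBall (closure Ω) o R) :
    ball y ((1 - Real.tanh R) * r) ⊆ Ω := by
  obtain ⟨w, hw, rfl⟩ := hy
  exact hΩ.ball_add_smul_sub_subset hr hw (Real.tanh_pos_of_pos hR).le (Real.tanh_lt_one R)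

theorem mem_of_infDist_asymptoticBall_lt (hΩ : Convex ℝ Ω) (hR : 0 < R) (hr₀ : 0 < r)
    (hr : ball o r ⊆ Ω) (hx : infDist x (asymptoticBall Ω o R) < (1 - Real.tanh R) * r) :
    x ∈ Ω := by
  have hA := ball_subset_asymptoticBall hR hr
    (mem_ball_self (mul_pos (Real.tanh_pos_of_pos hR) hr₀))
  obtain ⟨y, hy, hxy⟩ := (infDist_lt_iff ⟨o, hA⟩).mp hx
  exact ball_subset_of_mem_asymptoticBall_closure hΩ hR hr (image_mono subset_closure hy)
    (mem_ball.mpr hxy)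

theorem infDist_asymptoticBall_le (hx : x ∈ Ω) :
    infDist x (asymptoticBall Ω o R) ≤ (1 - Real.tanh R) * dist x o := by
  calc infDist x (asymptoticBall Ω o R) ≤ dist x (o + Real.tanh R • (x - o)) :=
        infDist_le_dist_of_mem ⟨x, hx, rfl⟩
    _ = (1 - Real.tanh R) * dist x o := by
        rw [dist_eq_norm, dist_eq_norm, show x - (o + Real.tanh R • (x - o))
          = (1 - Real.tanh R) • (x - o) by module, norm_smul, Real.norm_eq_abs,
          abs_of_pos (sub_pos.mpr (Real.tanh_lt_one R))]

theorem exists_hilbertDist_le_log_three_of_infDist_eq (hΩo : IsOpen Ω) (hΩc : Convex ℝ Ω)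
    (hΩb : Bornology.IsBounded Ω) (hR : 0 < R) (hr₀ : 0 < r) (hr : ball o r ⊆ Ω)
    (hx : infDist x (asymptoticBall Ω o R) = (1 - Real.tanh R) * r / 2) :
    ∃ y ∈ asymptoticBall Ω o R, hilbertDist Ω y x ≤ Real.log 3 / 2 := by
  set τ := Real.tanh R
  set δ := (1 - τ) * r / 2
  have hτ₀ : 0 < τ := Real.tanh_pos_of_pos hR
  have hτ₁ : τ < 1 := Real.tanh_lt_one R
  have hδ : 0 < δ := by have := sub_pos.mpr hτ₁; positivity
  have hball : closedBall o (τ * r) ⊆ closure (asymptoticBall Ω o R) := by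
    rw [← closure_ball o (by positivity)]
    exact closure_mono (ball_subset_asymptoticBall hR hr)
  obtain ⟨y₀, hy₀, hdist, hsupp⟩ := exists_norm_eq_infDist_and_mul_norm_le_inner
    isClosed_closure.isComplete hΩc.asymptoticBall.closure (by positivity) hball x
  rw [infDist_closure, hx] at hdist
  obtain ⟨w, hw, hwy₀ : o + τ • (w - o) = y₀⟩ := closure_asymptoticBall_subset hR hy₀
  set u := δ⁻¹ • (x - y₀)
  have hu : ‖u‖ = 1 := by
    rw [norm_smul, hdist, norm_inv, Real.norm_eq_abs, abs_of_pos hδ, inv_mul_cancel₀ hδ.ne']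
  have hwu : r ≤ ⟪u, w - o⟫_ℝ := by
    rw [hdist, ← hwy₀, add_sub_cancel_left, real_inner_smul_right, hwy₀] at hsupp
    rw [real_inner_smul_left, le_inv_mul_iff₀ hδ]
    nlinarith
  obtain ⟨L, hL, hback⟩ := hΩc.exists_lt_sub_smul_mem hr hw hr₀ hτ₀ hτ₁ hu hwu
  rw [hwy₀, smul_smul, ← div_eq_mul_inv] at hback
  have hLδ : 2 * δ < L := by simp only [δ]; linarith
  set β := 3 * L / (2 * L - δ)
  have hβ₁ : 1 < β := by rw [one_lt_div (by linarith)]; linarith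
  have hβ₂ : β < 2 := by rw [div_lt_iff₀ (by linarith)]; linarith
  have hfwd : y₀ + β • (x - y₀) ∈ Ω := by
    refine ball_subset_of_mem_asymptoticBall_closure hΩc hR hr ⟨w, hw, hwy₀⟩ ?_
    rw [mem_ball, dist_eq_norm, add_sub_cancel_left, norm_smul, hdist, Real.norm_eq_abs,
      abs_of_pos (by linarith), show (1 - Real.tanh R) * r = 2 * δ by simp only [δ, τ]; ring]
    nlinarith
  obtain ⟨y, hy, hyx⟩ := exists_hilbertDist_le_of_mem_closure hΩo hΩb (div_pos (by linarith) hδ)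
    hβ₁ hy₀ hback hfwd
  refine ⟨y, hy, hyx.trans_eq ?_⟩
  rw [cross_ratio_eq_three hδ hLδ]
  ring

theorem exists_hilbertDist_le_log_three (hΩo : IsOpen Ω) (hΩc : Convex ℝ Ω)
    (hΩb : Bornology.IsBounded Ω) (hR : 0 < R) (hr₀ : 0 < r) (hr : ball o r ⊆ Ω)
    (hx : infDist x (asymptoticBall Ω o R) ≤ (1 - Real.tanh R) * r / 2) :
    ∃ y ∈ asymptoticBall Ω o R, hilbertDist Ω y x ≤ Real.log 3 / 2 := by
  rcases hx.lt_or_eq with hlt | heq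
  · have hA := ball_subset_asymptoticBall hR hr
      (mem_ball_self (mul_pos (Real.tanh_pos_of_pos hR) hr₀))
    obtain ⟨y, hy, hxy⟩ := (infDist_lt_iff ⟨o, hA⟩).mp hlt
    have hyΩ := ball_subset_of_mem_asymptoticBall_closure hΩc hR hr (image_mono subset_closure hy)
    have h2 : ‖(2 : ℝ) • (x - y)‖ < (1 - Real.tanh R) * r := by
      rw [norm_smul, ← dist_eq_norm]; norm_num; linarith
    obtain ⟨y', hy', hy'x⟩ := exists_hilbertDist_le_of_mem_closure hΩo hΩb two_pos one_lt_two
      (subset_closure hy) (hyΩ (by rwa [mem_ball, dist_eq_norm, sub_sub_cancel_left, norm_neg]))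
      (hyΩ (by rwa [mem_ball, dist_eq_norm, add_sub_cancel_left]))
    refine ⟨y', hy', hy'x.trans_eq ?_⟩
    norm_num
    ring
  · exact exists_hilbertDist_le_log_three_of_infDist_eq hΩo hΩc hΩb hR hr₀ hr heq

end AsymptoticBall

open Filter MeasureTheory Metric Set in
theorem asymptoticBall_neighbourhoods_general (n : ℕ) (hn : 1 ≤ n) (Ω : Set (Euc n))
    (hΩopen : IsOpen Ω) (hΩconv : Convex ℝ Ω) (hΩbdd : Bornology.IsBounded Ω)
    (o : Euc n)
    (hin : Metric.ball o (1 / n) ⊆ Ω) (hout : Ω ⊆ Metric.ball o 1)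
    (R : ℝ) (hR : 0 < R) :
    (∀ x : Euc n,
      Metric.infDist x (asymptoticBall Ω o R) ≤ (1 - Real.tanh R) / (2 * n) →
        x ∈ Ω ∧ ∃ y ∈ asymptoticBall Ω o R, hilbertDist Ω y x ≤ Real.log 3 / 2) ∧
    (∀ x ∈ Ω, Metric.infDist x (asymptoticBall Ω o R) ≤ 1 - Real.tanh R) := by
  have hr : (0 : ℝ) < 1 / n := one_div_pos.mpr (by exact_mod_cast hn)
  have hτ : 0 < 1 - Real.tanh R := sub_pos.mpr (Real.tanh_lt_one R)
  have hδ : (1 - Real.tanh R) / (2 * n) = (1 - Real.tanh R) * (1 / n) / 2 := by ring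
  refine ⟨fun x hx => ⟨?_, ?_⟩, fun x hx => ?_⟩
  · refine mem_of_infDist_asymptoticBall_lt hΩconv hR hr hin (hx.trans_lt ?_)
    rw [hδ]
    linarith [mul_pos hτ hr]
  · exact exists_hilbertDist_le_log_three hΩopen hΩconv hΩbdd hR hr hin (hδ ▸ hx)
  · calc infDist x (asymptoticBall Ω o R) ≤ (1 - Real.tanh R) * dist x o :=
          infDist_asymptoticBall_le hx
      _ ≤ 1 - Real.tanh R := mul_le_of_le_one_right hτ.le (mem_ball.mp (hout hx)).le

open Filter MeasureTheory Metric Set in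
/-- **Comparison of Hausdorff-Euclidean and Hausdorff-Hilbert neighbourhoods of asymptotic
balls.** Suppose `B(o,1/n) ⊆ Ω ⊆ B(o,1)`. Then (1) every point whose Euclidean distance to
`AsB(o,R)` is at most `(1 − tanh R)/(2n)` lies in `Ω` and is at Hilbert distance at most
`(ln 3)/2` from `AsB(o,R)`; (2) every point of `Ω` is at Euclidean distance at most
`1 − tanh R` from `AsB(o,R)`. -/
theorem asymptoticBall_neighbourhoods (n : ℕ) (hn : 1 ≤ n) (Ω : Set (Euc n))
    (hΩopen : IsOpen Ω) (hΩconv : Convex ℝ Ω) (hΩbdd : Bornology.IsBounded Ω)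
    (o : Euc n) (ho : o ∈ Ω)
    (hin : Metric.ball o (1 / n) ⊆ Ω) (hout : Ω ⊆ Metric.ball o 1)
    (R : ℝ) (hR : 0 < R) :
    (∀ x : Euc n,
      Metric.infDist x (asymptoticBall Ω o R) ≤ (1 - Real.tanh R) / (2 * n) →
        x ∈ Ω ∧ ∃ y ∈ asymptoticBall Ω o R, hilbertDist Ω y x ≤ Real.log 3 / 2) ∧
    (∀ x ∈ Ω, Metric.infDist x (asymptoticBall Ω o R) ≤ 1 - Real.tanh R) :=
  asymptoticBall_neighbourhoods_general n hn Ω hΩopen hΩconv hΩbdd o hin hout R hR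
end

section
/- Let Ω ⊂ ℝⁿ be a bounded open convex set with Hilbert metric d_Ω, let p ∈ Ω, and let H be an affine hyperplane intersecting Ω. A point q ∈ H ∩ Ω satisfies d_Ω(p,q) = inf{ d_Ω(p,h) : h ∈ H ∩ Ω } if and only if, denoting by x and y the two points where the line through p and q meets ∂Ω, there exist supporting hyperplanes ξ of Ω at x and η of Ω at y whose projective closures, together with the projective closure of H, contain a common (n−2)-dimensional projective subspace of ℝPⁿ (in particular the intersection may lie in the hyperplane at infinity, which corresponds to ξ, η and H having a common (n−2)-dimensional direction). (When p ∈ H the statement is understood for q = p.) -/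
/-!
Let `g` be the gauge of `Ω` centred at `p`. The chord of `Ω` through `p` in direction `w` ends
at `p - w / g (-w)` and `p + w / g w`, and `d_Ω(p, p + w) = ½ log ((1 + g (-w)) / (1 - g w))`.

If `ξ = {f_ξ = c_ξ}` and `η = {f_η = c_η}` support `Ω`, the affine functions `ℓ = c - f` satisfy
`ℓ_ξ h ≤ ℓ_ξ p (1 + g (p - h))` and `ℓ_η h ≥ ℓ_η p (1 - g (h - p))`, with equality at `h = q`
when `ξ` and `η` touch `∂Ω` at the two ends of the chord through `q`. If moreover `ξ`, `η`, `H`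
lie in a pencil, `ℓ_ξ / ℓ_η` is constant on `H`, and these bounds show that `q` is closest to `p`.

Conversely, let `q` be closest and `r = exp (2 d_Ω(p, q))`. Minimality and homogeneity make the
sublinear function `w ↦ g (-w) + r g w` dominate `θ f_H` for a suitable `θ`, so Hahn–Banach
splits `θ f_H = φ_η - φ_ξ` with `φ_ξ ≤ g` and `φ_η ≤ r g`. Both bounds are attained in the
direction `q - p`, hence `φ_ξ` and `φ_η` define supporting hyperplanes at the ends of the chord,
and they lie in a pencil with `H` by construction.
-/

open Filter MeasureTheory Metric Set

open scoped Pointwise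

theorem mem_neg_vadd_set_iff_add_mem {E : Type*} [AddGroup E] {Ω : Set E} {p w : E} :
    w ∈ -p +ᵥ Ω ↔ p + w ∈ Ω := by
  simp [mem_vadd_set_iff_neg_vadd_mem]

section Linear

variable {E : Type*} [AddCommGroup E] [Module ℝ E]

theorem exists_sub_eq_of_le_sublinear {N₁ N₂ : E → ℝ}
    (hN₁_smul : ∀ c : ℝ, 0 < c → ∀ x, N₁ (c • x) = c * N₁ x)
    (hN₁_add : ∀ x y, N₁ (x + y) ≤ N₁ x + N₁ y)
    (hN₂_smul : ∀ c : ℝ, 0 < c → ∀ x, N₂ (c • x) = c * N₂ x)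
    (hN₂_add : ∀ x y, N₂ (x + y) ≤ N₂ x + N₂ y)
    (ℓ : E →ₗ[ℝ] ℝ) (hℓ : ∀ x, ℓ x ≤ N₁ (-x) + N₂ x) :
    ∃ φ₁ φ₂ : E →ₗ[ℝ] ℝ, (∀ x, φ₁ x ≤ N₁ x) ∧ (∀ x, φ₂ x ≤ N₂ x) ∧ φ₂ - φ₁ = ℓ := by
  have hN₁_zero : N₁ 0 = 0 := by have := hN₁_smul 2 two_pos 0; rw [smul_zero] at this; linarith
  have hN₂_zero : N₂ 0 = 0 := by have := hN₂_smul 2 two_pos 0; rw [smul_zero] at this; linarith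
  -- Hahn–Banach for the sublinear `(x₁, x₂) ↦ N₁ x₁ + N₂ x₂` on `E × E`, starting from
  -- `(-x, x) ↦ ℓ x` on the antidiagonal; `φ₁`, `φ₂` are the restrictions to the two factors.
  let D := LinearMap.ker (LinearMap.fst ℝ E E + LinearMap.snd ℝ E E)
  obtain ⟨Ψ, hΨD, hΨN⟩ := exists_extension_of_le_sublinear
    ⟨D, (ℓ ∘ₗ LinearMap.snd ℝ E E).domRestrict D⟩ (fun x => N₁ x.1 + N₂ x.2)
    (fun c hc x => by
      simp only [Prod.smul_fst, Prod.smul_snd, hN₁_smul c hc, hN₂_smul c hc, mul_add])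
    (fun x y => by
      simp only [Prod.fst_add, Prod.snd_add]; linarith [hN₁_add x.1 y.1, hN₂_add x.2 y.2])
    (by
      rintro ⟨⟨x₁, x₂⟩, hx⟩
      obtain rfl : x₁ = -x₂ := eq_neg_of_add_eq_zero_left hx
      exact hℓ x₂)
  refine ⟨Ψ ∘ₗ LinearMap.inl ℝ E E, Ψ ∘ₗ LinearMap.inr ℝ E E, fun x => ?_, fun x => ?_, ?_⟩
  · simpa [hN₂_zero] using hΨN (x, 0)
  · simpa [hN₁_zero] using hΨN (0, x)
  · ext x
    have h := hΨD ⟨(-x, x), by simp [D]⟩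
    have hsplit : ((-x, x) : E × E) = -LinearMap.inl ℝ E E x + LinearMap.inr ℝ E E x := by simp
    simp only [LinearPMap.mk_apply, LinearMap.domRestrict_apply, LinearMap.comp_apply,
      LinearMap.snd_apply] at h
    simp only [LinearMap.sub_apply, LinearMap.comp_apply, ← h, hsplit, map_add, map_neg]
    ring

theorem div_mul_le_of_le_on_hyperplane {Φ : E → ℝ}
    (hΦ_nonneg : ∀ w, 0 ≤ Φ w) (hΦ_smul : ∀ t : ℝ, 0 < t → ∀ w, Φ (t • w) = t * Φ w)
    {f : E →ₗ[ℝ] ℝ} {c m : ℝ} (hc : c ≠ 0) (hm : 0 ≤ m) (h : ∀ w, f w = c → m ≤ Φ w) (w : E) :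
    m / c * f w ≤ Φ w := by
  rcases le_or_gt (m / c * f w) 0 with hneg | hpos
  · exact hneg.trans (hΦ_nonneg w)
  have hfw : f w ≠ 0 := by rintro hfw; simp [hfw] at hpos
  have ht : 0 < c / f w := by
    have : 0 < m / c * f w * (c / f w) ^ 2 := by positivity
    rw [show m / c * f w * (c / f w) ^ 2 = m * (c / f w) by field_simp] at this
    exact pos_of_mul_pos_right this hm
  have := h ((c / f w) • w) (by rw [map_smul, smul_eq_mul, div_mul_cancel₀ _ hfw])
  rw [hΦ_smul _ ht] at this
  calc m / c * f w = m / (c / f w) := by field_simp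
    _ ≤ Φ w := by rwa [div_le_iff₀' ht]

theorem sub_apply_add_eq_of_apply_add_smul_eq {f : E →ₗ[ℝ] ℝ} {c t : ℝ} {p v : E} (ht : t ≠ 0)
    (h : f (p + t • v) = c) : c - f (p + v) = (c - f p) * (1 - t⁻¹) := by
  rw [← h]
  simp only [map_add, map_smul, smul_eq_mul]
  field_simp
  ring

theorem mul_sub_apply_eq_of_not_linearIndependent {f₁ f₂ f₃ : E →ₗ[ℝ] ℝ} {c₁ c₂ c₃ : ℝ}
    (hf₃ : f₃ ≠ 0) (h : ¬LinearIndependent ℝ ![(f₁, c₁), (f₂, c₂), (f₃, c₃)]) {x y : E}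
    (hx : f₃ x = c₃) (hy : f₃ y = c₃) :
    (c₁ - f₁ x) * (c₂ - f₂ y) = (c₁ - f₁ y) * (c₂ - f₂ x) := by
  obtain ⟨g, hg, i, hi⟩ := Fintype.not_linearIndependent_iff.1 h
  simp only [Fin.sum_univ_three, Matrix.cons_val_zero, Matrix.cons_val_one, Matrix.cons_val_two,
    Matrix.head_cons, Matrix.tail_cons, Prod.smul_mk, Prod.mk_add_mk, smul_eq_mul,
    Prod.mk_eq_zero] at hg
  obtain ⟨hgf, hgc⟩ := hg
  have hrel (z : E) (hz : f₃ z = c₃) : g 0 * (c₁ - f₁ z) + g 1 * (c₂ - f₂ z) = 0 := by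
    have := LinearMap.congr_fun hgf z
    simp only [LinearMap.add_apply, LinearMap.smul_apply, smul_eq_mul,
      LinearMap.zero_apply, hz] at this
    linear_combination hgc - this
  have hg01 : g 0 ≠ 0 ∨ g 1 ≠ 0 := by
    by_contra! h01
    rw [h01.1, h01.2, zero_smul, zero_smul, zero_add, zero_add, smul_eq_zero] at hgf
    have hg2 : g 2 = 0 := hgf.resolve_right hf₃
    fin_cases i <;> simp_all
  have hx' := hrel x hx
  have hy' := hrel y hy
  rcases hg01 with h0 | h1
  · exact mul_left_cancel₀ h0 (by linear_combination (c₂ - f₂ y) * hx' - (c₂ - f₂ x) * hy')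
  · exact mul_left_cancel₀ h1 (by linear_combination (c₁ - f₁ x) * hy' - (c₁ - f₁ y) * hx')

theorem not_linearIndependent_of_sub_eq_smul {f₁ f₂ f₃ : E →ₗ[ℝ] ℝ} {c₁ c₂ c₃ θ : ℝ}
    (hf : f₂ - f₁ = θ • f₃) (hc : c₂ - c₁ = θ * c₃) :
    ¬LinearIndependent ℝ ![(f₁, c₁), (f₂, c₂), (f₃, c₃)] := by
  refine Fintype.not_linearIndependent_iff.2 ⟨![-1, 1, -θ], ?_, 0, by simp⟩
  simp only [Fin.sum_univ_three, Matrix.cons_val_zero, Matrix.cons_val_one, Matrix.cons_val_two,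
    Matrix.head_cons, Matrix.tail_cons, Prod.smul_mk, Prod.mk_add_mk, smul_eq_mul,
    Prod.mk_eq_zero]
  constructor
  · rw [← sub_eq_zero.2 hf]; module
  · linear_combination hc

def IsSupportingHyperplane (Ω : Set E) (f : E →ₗ[ℝ] ℝ) (c : ℝ) (x : E) : Prop :=
  f ≠ 0 ∧ f x = c ∧ ∀ z ∈ Ω, f z ≤ c

end Linear

section Gauge

variable {E : Type*} [NormedAddCommGroup E] [NormedSpace ℝ E] {Ω : Set E} {p : E}

theorem absorbent_neg_vadd_set (hΩo : IsOpen Ω) (hp : p ∈ Ω) : Absorbent ℝ (-p +ᵥ Ω) :=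
  absorbent_nhds_zero ((hΩo.vadd _).mem_nhds (by simpa [mem_neg_vadd_set_iff_add_mem]))

theorem gauge_neg_vadd_set_lt_one_iff (hΩo : IsOpen Ω) (hΩc : Convex ℝ Ω) (hp : p ∈ Ω) (w : E) :
    gauge (-p +ᵥ Ω) w < 1 ↔ p + w ∈ Ω := by
  rw [← mem_neg_vadd_set_iff_add_mem]
  exact Set.ext_iff.1 (setOfPred_gauge_lt_one_eq_self_of_isOpen (hΩc.vadd _)
    (by simpa [mem_neg_vadd_set_iff_add_mem]) (hΩo.vadd _)) w

theorem gauge_neg_vadd_set_pos (hΩo : IsOpen Ω) (hΩb : Bornology.IsBounded Ω) (hp : p ∈ Ω)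
    {w : E} (hw : w ≠ 0) : 0 < gauge (-p +ᵥ Ω) w :=
  (gauge_pos (absorbent_neg_vadd_set hΩo hp)
    ((Bornology.isVonNBounded_vadd _).2 ((NormedSpace.isVonNBounded_iff ℝ).2 hΩb))).2 hw

theorem sSup_setOf_add_smul_mem (hΩo : IsOpen Ω) (hΩc : Convex ℝ Ω)
    (hΩb : Bornology.IsBounded Ω) (hp : p ∈ Ω) {w : E} (hw : w ≠ 0) :
    sSup {t : ℝ | p + t • w ∈ Ω} = (gauge (-p +ᵥ Ω) w)⁻¹ := by
  have hg := gauge_neg_vadd_set_pos hΩo hΩb hp hw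
  have hmem (t : ℝ) (ht : 0 ≤ t) : p + t • w ∈ Ω ↔ t < (gauge (-p +ᵥ Ω) w)⁻¹ := by
    rw [← gauge_neg_vadd_set_lt_one_iff hΩo hΩc hp, gauge_smul_of_nonneg ht, smul_eq_mul,
      ← one_div, lt_div_iff₀ hg]
  have hlub : IsLUB {t : ℝ | p + t • w ∈ Ω} (gauge (-p +ᵥ Ω) w)⁻¹ := by
    refine (isLUB_Ioo (inv_pos.2 hg)).of_subset_of_superset isLUB_Iio
      (fun t ht => (hmem t ht.1.le).2 ht.2) (fun t ht => ?_)
    rcases le_or_gt t 0 with ht0 | ht0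
    · exact ht0.trans_lt (inv_pos.2 hg)
    · exact (hmem t ht0.le).1 ht
  exact hlub.csSup_eq ⟨0, by simpa⟩

theorem sInf_setOf_add_smul_mem (hΩo : IsOpen Ω) (hΩc : Convex ℝ Ω)
    (hΩb : Bornology.IsBounded Ω) (hp : p ∈ Ω) {w : E} (hw : w ≠ 0) :
    sInf {t : ℝ | p + t • w ∈ Ω} = -(gauge (-p +ᵥ Ω) (-w))⁻¹ := by
  have hneg : -{t : ℝ | p + t • w ∈ Ω} = {t : ℝ | p + t • -w ∈ Ω} := by
    ext t; simp [smul_neg, neg_smul]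
  rw [Real.sInf_def, hneg, sSup_setOf_add_smul_mem hΩo hΩc hΩb hp (neg_ne_zero.2 hw)]

theorem apply_le_mul_gauge_neg_vadd_set (hΩo : IsOpen Ω) (hp : p ∈ Ω) {f : E →ₗ[ℝ] ℝ} {c : ℝ}
    (hf : ∀ z ∈ Ω, f z ≤ c) (w : E) : f w ≤ (c - f p) * gauge (-p +ᵥ Ω) w := by
  have hA : 0 ≤ c - f p := sub_nonneg.2 (hf p hp)
  have hlt (r : ℝ) (hr : gauge (-p +ᵥ Ω) w < r) : f w ≤ (c - f p) * r := by
    obtain ⟨b, hb, hbr, u, hu, rfl⟩ := exists_lt_of_gauge_lt (absorbent_neg_vadd_set hΩo hp) hr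
    have hfu : f u ≤ c - f p := by
      have := hf _ (mem_neg_vadd_set_iff_add_mem.1 hu); rw [map_add] at this; linarith
    rw [map_smul, smul_eq_mul]
    nlinarith
  exact ge_of_tendsto (((continuous_const_mul (c - f p)).tendsto _).mono_left
    nhdsWithin_le_nhds) (eventually_nhdsWithin_of_forall (s := Ioi _) hlt)


theorem apply_lt_of_forall_apply_le (hΩo : IsOpen Ω) (hp : p ∈ Ω) {f : E →ₗ[ℝ] ℝ} {c : ℝ}
    (hf₀ : f ≠ 0) (hf : ∀ z ∈ Ω, f z ≤ c) : f p < c := by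
  refine (hf p hp).lt_of_ne fun hfp => hf₀ (LinearMap.ext fun w => le_antisymm ?_ ?_)
  · simpa [hfp] using apply_le_mul_gauge_neg_vadd_set hΩo hp hf w
  · simpa [hfp] using apply_le_mul_gauge_neg_vadd_set hΩo hp hf (-w)

theorem sub_apply_le_mul_one_add_gauge (hΩo : IsOpen Ω) (hp : p ∈ Ω) {f : E →ₗ[ℝ] ℝ} {c : ℝ}
    (hf : ∀ z ∈ Ω, f z ≤ c) (h : E) : c - f h ≤ (c - f p) * (1 + gauge (-p +ᵥ Ω) (p - h)) := by
  have := apply_le_mul_gauge_neg_vadd_set hΩo hp hf (p - h)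
  rw [map_sub] at this
  linarith

theorem mul_one_sub_gauge_le_sub_apply (hΩo : IsOpen Ω) (hp : p ∈ Ω) {f : E →ₗ[ℝ] ℝ} {c : ℝ}
    (hf : ∀ z ∈ Ω, f z ≤ c) (h : E) : (c - f p) * (1 - gauge (-p +ᵥ Ω) (h - p)) ≤ c - f h := by
  have := apply_le_mul_gauge_neg_vadd_set hΩo hp hf (h - p)
  rw [map_sub] at this
  linarith

theorem isSupportingHyperplane_of_le_mul_gauge (hΩo : IsOpen Ω) (hΩc : Convex ℝ Ω) (hp : p ∈ Ω)
    {φ : E →ₗ[ℝ] ℝ} {μ : ℝ} (hμ : 0 < μ) (hφ : ∀ w, φ w ≤ μ * gauge (-p +ᵥ Ω) w) {v : E}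
    (hv : 0 < gauge (-p +ᵥ Ω) v) (hφv : φ v = μ * gauge (-p +ᵥ Ω) v) :
    IsSupportingHyperplane Ω φ (φ p + μ) (p + (gauge (-p +ᵥ Ω) v)⁻¹ • v) := by
  refine ⟨fun hφ₀ => ?_, ?_, fun z hz => ?_⟩
  · simp only [hφ₀, LinearMap.zero_apply] at hφv
    exact (mul_pos hμ hv).ne hφv
  · rw [map_add, map_smul, smul_eq_mul, hφv]
    field_simp
  · have hz₁ := (gauge_neg_vadd_set_lt_one_iff hΩo hΩc hp (z - p)).2 (by simpa)
    have := hφ (z - p)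
    rw [map_sub] at this
    nlinarith

end Gauge

/-- The cross ratio `[x, p, p + w, y]` of the chord of `Ω` through `p` and `p + w`, whose
endpoints are `x = p - w / g (-w)` and `y = p + w / g w` for the gauge `g` of `Ω` centred at `p`. -/
noncomputable def chordCrossRatio {E : Type*} [AddCommGroup E] [Module ℝ E] (Ω : Set E)
    (p w : E) : ℝ :=
  (1 + gauge (-p +ᵥ Ω) (-w)) / (1 - gauge (-p +ᵥ Ω) w)

theorem hilbertDist_eq_half_log_chordCrossRatio {n : ℕ} {Ω : Set (Euc n)} (hΩo : IsOpen Ω)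
    (hΩc : Convex ℝ Ω) (hΩb : Bornology.IsBounded Ω) {p h : Euc n} (hp : p ∈ Ω) :
    hilbertDist Ω p h = 1 / 2 * Real.log (chordCrossRatio Ω p (h - p)) := by
  rcases eq_or_ne p h with rfl | hph
  · simp [hilbertDist, chordCrossRatio]
  have hw : h - p ≠ 0 := sub_ne_zero.2 hph.symm
  have ha := gauge_neg_vadd_set_pos hΩo hΩb hp (sub_ne_zero.2 hph)
  have hb := gauge_neg_vadd_set_pos hΩo hΩb hp hw
  rw [hilbertDist, if_neg hph, lineParams, sInf_setOf_add_smul_mem hΩo hΩc hΩb hp hw,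
    sSup_setOf_add_smul_mem hΩo hΩc hΩb hp hw, chordCrossRatio, neg_sub]
  set a := gauge (-p +ᵥ Ω) (p - h)
  set b := gauge (-p +ᵥ Ω) (h - p)
  have hb' : b⁻¹ / (b⁻¹ - 1) = 1 / (1 - b) := by
    rw [← mul_div_mul_right _ _ hb.ne', sub_mul, inv_mul_cancel₀ hb.ne', one_mul]
  have ha' : (1 - -a⁻¹) / - -a⁻¹ = 1 + a := by field_simp; ring
  rw [hb', ha', mul_one_div]

theorem one_le_chordCrossRatio {E : Type*} [NormedAddCommGroup E] [NormedSpace ℝ E] {Ω : Set E}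
    (hΩo : IsOpen Ω) (hΩc : Convex ℝ Ω) {p w : E} (hp : p ∈ Ω) (hw : p + w ∈ Ω) :
    1 ≤ chordCrossRatio Ω p w := by
  have hw₁ := (gauge_neg_vadd_set_lt_one_iff hΩo hΩc hp w).2 hw
  rw [chordCrossRatio, one_le_div (by linarith)]
  linarith [gauge_nonneg (s := -p +ᵥ Ω) (-w), gauge_nonneg (s := -p +ᵥ Ω) w]

theorem one_lt_chordCrossRatio {E : Type*} [NormedAddCommGroup E] [NormedSpace ℝ E] {Ω : Set E}
    (hΩo : IsOpen Ω) (hΩc : Convex ℝ Ω) (hΩb : Bornology.IsBounded Ω) {p w : E} (hp : p ∈ Ω)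
    (hw₀ : w ≠ 0) (hw : p + w ∈ Ω) : 1 < chordCrossRatio Ω p w := by
  have hw₁ := (gauge_neg_vadd_set_lt_one_iff hΩo hΩc hp w).2 hw
  rw [chordCrossRatio, one_lt_div (by linarith)]
  linarith [gauge_neg_vadd_set_pos hΩo hΩb hp (neg_ne_zero.2 hw₀),
    gauge_neg_vadd_set_pos hΩo hΩb hp hw₀]

theorem hilbertDist_eq_sInf_image_iff {n : ℕ} {Ω : Set (Euc n)} (hΩo : IsOpen Ω)
    (hΩc : Convex ℝ Ω) (hΩb : Bornology.IsBounded Ω) {p q : Euc n} (hp : p ∈ Ω)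
    {S : Set (Euc n)} (hS : S ⊆ Ω) (hq : q ∈ S) :
    hilbertDist Ω p q = sInf (hilbertDist Ω p '' S) ↔
      ∀ h ∈ S, chordCrossRatio Ω p (q - p) ≤ chordCrossRatio Ω p (h - p) := by
  have hR (h : Euc n) (hh : h ∈ S) : 1 ≤ chordCrossRatio Ω p (h - p) :=
    one_le_chordCrossRatio hΩo hΩc hp (by simpa using hS hh)
  have hd (h : Euc n) : hilbertDist Ω p h = 1 / 2 * Real.log (chordCrossRatio Ω p (h - p)) :=
    hilbertDist_eq_half_log_chordCrossRatio hΩo hΩc hΩb hp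
  have hle (h : Euc n) (hh : h ∈ S) : hilbertDist Ω p q ≤ hilbertDist Ω p h ↔
      chordCrossRatio Ω p (q - p) ≤ chordCrossRatio Ω p (h - p) := by
    rw [hd, hd, mul_le_mul_iff_right₀ one_half_pos,
      Real.log_le_log_iff (by linarith [hR q hq]) (by linarith [hR h hh])]
  have hbdd : BddBelow (hilbertDist Ω p '' S) := by
    refine ⟨0, forall_mem_image.2 fun h hh => ?_⟩
    rw [hd]
    exact mul_nonneg one_half_pos.le (Real.log_nonneg (hR h hh))
  constructor
  · intro hmin h hh
    exact (hle h hh).1 (hmin ▸ csInf_le hbdd (mem_image_of_mem _ hh))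
  · intro hmin
    exact (IsLeast.csInf_eq ⟨mem_image_of_mem _ hq,
      forall_mem_image.2 fun h hh => (hle h hh).2 (hmin h hh)⟩).symm

section Projection

variable {E : Type*} [NormedAddCommGroup E] [NormedSpace ℝ E] {Ω : Set E} {p q : E}
  {fH : E →ₗ[ℝ] ℝ} {cH : ℝ}

theorem chordCrossRatio_le_of_isSupportingHyperplane_of_not_linearIndependent (hΩo : IsOpen Ω)
    (hΩc : Convex ℝ Ω) (hΩb : Bornology.IsBounded Ω) (hp : p ∈ Ω) (hq : q ∈ Ω) (hqp : q ≠ p)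
    (hfH : fH ≠ 0) (hqH : fH q = cH) {fξ fη : E →ₗ[ℝ] ℝ} {cξ cη : ℝ}
    (hξ : IsSupportingHyperplane Ω fξ cξ (p + sInf {t : ℝ | p + t • (q - p) ∈ Ω} • (q - p)))
    (hη : IsSupportingHyperplane Ω fη cη (p + sSup {t : ℝ | p + t • (q - p) ∈ Ω} • (q - p)))
    (hpencil : ¬LinearIndependent ℝ ![(fξ, cξ), (fη, cη), (fH, cH)])
    {h : E} (hh : h ∈ Ω) (hhH : fH h = cH) :
    chordCrossRatio Ω p (q - p) ≤ chordCrossRatio Ω p (h - p) := by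
  have hv : q - p ≠ 0 := sub_ne_zero.2 hqp
  have ha := gauge_neg_vadd_set_pos hΩo hΩb hp (neg_ne_zero.2 hv)
  have hb := gauge_neg_vadd_set_pos hΩo hΩb hp hv
  have hb₁ := (gauge_neg_vadd_set_lt_one_iff hΩo hΩc hp (q - p)).2 (by simpa using hq)
  have hh₁ := (gauge_neg_vadd_set_lt_one_iff hΩo hΩc hp (h - p)).2 (by simpa using hh)
  rw [sInf_setOf_add_smul_mem hΩo hΩc hΩb hp hv] at hξ
  rw [sSup_setOf_add_smul_mem hΩo hΩc hΩb hp hv] at hη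
  have hAξ := sub_pos.2 (apply_lt_of_forall_apply_le hΩo hp hξ.1 hξ.2.2)
  have hAη := sub_pos.2 (apply_lt_of_forall_apply_le hΩo hp hη.1 hη.2.2)
  have hξq : cξ - fξ q = (cξ - fξ p) * (1 + gauge (-p +ᵥ Ω) (-(q - p))) := by
    simpa using sub_apply_add_eq_of_apply_add_smul_eq (neg_ne_zero.2 (inv_ne_zero ha.ne')) hξ.2.1
  have hηq : cη - fη q = (cη - fη p) * (1 - gauge (-p +ᵥ Ω) (q - p)) := by
    simpa using sub_apply_add_eq_of_apply_add_smul_eq (inv_ne_zero hb.ne') hη.2.1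
  have hξh := sub_apply_le_mul_one_add_gauge hΩo hp hξ.2.2 h
  have hηh := mul_one_sub_gauge_le_sub_apply hΩo hp hη.2.2 h
  have hdet := mul_sub_apply_eq_of_not_linearIndependent hfH hpencil hqH hhH
  rw [chordCrossRatio, chordCrossRatio, neg_sub h, div_le_div_iff₀ (by linarith) (by linarith)]
  refine le_of_mul_le_mul_left ?_ (mul_pos hAξ hAη)
  calc (cξ - fξ p) * (cη - fη p) * ((1 + gauge (-p +ᵥ Ω) (-(q - p))) *
        (1 - gauge (-p +ᵥ Ω) (h - p)))
      = (cξ - fξ q) * ((cη - fη p) * (1 - gauge (-p +ᵥ Ω) (h - p))) := by rw [hξq]; ring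
    _ ≤ (cξ - fξ q) * (cη - fη h) :=
        mul_le_mul_of_nonneg_left hηh (by rw [hξq]; positivity)
    _ = (cξ - fξ h) * (cη - fη q) := hdet
    _ ≤ (cξ - fξ p) * (1 + gauge (-p +ᵥ Ω) (p - h)) * (cη - fη q) :=
        mul_le_mul_of_nonneg_right hξh (by rw [hηq]; exact mul_nonneg hAη.le (by linarith))
    _ = _ := by rw [hηq]; ring

theorem sub_one_le_gauge_neg_add_mul_gauge (hΩo : IsOpen Ω) (hΩc : Convex ℝ Ω) (hp : p ∈ Ω)
    (hq : q ∈ Ω) (hmin : ∀ h ∈ {x | fH x = cH} ∩ Ω,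
      chordCrossRatio Ω p (q - p) ≤ chordCrossRatio Ω p (h - p))
    {w : E} (hw : fH w = cH - fH p) :
    chordCrossRatio Ω p (q - p) - 1 ≤
      gauge (-p +ᵥ Ω) (-w) + chordCrossRatio Ω p (q - p) * gauge (-p +ᵥ Ω) w := by
  have hr := one_le_chordCrossRatio hΩo hΩc hp (w := q - p) (by simpa using hq)
  have hG₀ := gauge_nonneg (s := -p +ᵥ Ω) (-w)
  set r := chordCrossRatio Ω p (q - p)
  by_cases hpw : p + w ∈ Ω
  · have hw₁ := (gauge_neg_vadd_set_lt_one_iff hΩo hΩc hp w).2 hpw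
    have := hmin (p + w) ⟨by simp [hw], hpw⟩
    rw [add_sub_cancel_left, chordCrossRatio, le_div_iff₀ (by linarith)] at this
    linarith
  · have hw₁ := not_lt.1 (mt (gauge_neg_vadd_set_lt_one_iff hΩo hΩc hp w).1 hpw)
    nlinarith

theorem exists_isSupportingHyperplane_of_sub_eq_smul (hΩo : IsOpen Ω) (hΩc : Convex ℝ Ω)
    (hΩb : Bornology.IsBounded Ω) (hp : p ∈ Ω) (hq : q ∈ Ω) (hqp : q ≠ p) (hqH : fH q = cH)
    {φξ φη : E →ₗ[ℝ] ℝ} {θ : ℝ} (hφξ : ∀ w, φξ w ≤ gauge (-p +ᵥ Ω) w)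
    (hφη : ∀ w, φη w ≤ chordCrossRatio Ω p (q - p) * gauge (-p +ᵥ Ω) w)
    (hφ : φη - φξ = θ • fH) (hθ : θ * (cH - fH p) = chordCrossRatio Ω p (q - p) - 1) :
    ∃ (fξ : E →ₗ[ℝ] ℝ) (cξ : ℝ) (fη : E →ₗ[ℝ] ℝ) (cη : ℝ),
      IsSupportingHyperplane Ω fξ cξ (p + sInf {t : ℝ | p + t • (q - p) ∈ Ω} • (q - p)) ∧
      IsSupportingHyperplane Ω fη cη (p + sSup {t : ℝ | p + t • (q - p) ∈ Ω} • (q - p)) ∧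
      ¬LinearIndependent ℝ ![(fξ, cξ), (fη, cη), (fH, cH)] := by
  have hv : q - p ≠ 0 := sub_ne_zero.2 hqp
  have ha := gauge_neg_vadd_set_pos hΩo hΩb hp (neg_ne_zero.2 hv)
  have hb := gauge_neg_vadd_set_pos hΩo hΩb hp hv
  have hb₁ := (gauge_neg_vadd_set_lt_one_iff hΩo hΩc hp (q - p)).2 (by simpa using hq)
  set G := gauge (-p +ᵥ Ω)
  set r := chordCrossRatio Ω p (q - p)
  have hr : r * (1 - G (q - p)) = 1 + G (-(q - p)) := div_mul_cancel₀ _ (by linarith)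
  have hφ_apply (w : E) : φη w - φξ w = θ * fH w := by simpa using LinearMap.congr_fun hφ w
  -- Both bounds on `φξ (-(q - p))` and `φη (q - p)` are attained, as they add up to `r - 1`.
  have hφv : φη (q - p) - φξ (q - p) = G (-(q - p)) + r * G (q - p) := by
    rw [hφ_apply, map_sub, hqH, hθ]
    linarith
  have hξv : φξ (-(q - p)) = 1 * G (-(q - p)) := by
    rw [one_mul, map_neg]
    linarith [hφξ (-(q - p)), map_neg φξ (q - p), hφη (q - p)]
  have hηv : φη (q - p) = r * G (q - p) := by
    linarith [hφξ (-(q - p)), map_neg φξ (q - p), hφη (q - p)]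
  refine ⟨φξ, φξ p + 1, φη, φη p + r, ?_, ?_, not_linearIndependent_of_sub_eq_smul hφ ?_⟩
  · rw [sInf_setOf_add_smul_mem hΩo hΩc hΩb hp hv, neg_smul, ← smul_neg]
    exact isSupportingHyperplane_of_le_mul_gauge hΩo hΩc hp one_pos (by simpa using hφξ) ha hξv
  · rw [sSup_setOf_add_smul_mem hΩo hΩc hΩb hp hv]
    exact isSupportingHyperplane_of_le_mul_gauge hΩo hΩc hp (by nlinarith) hφη hb hηv
  · linear_combination hφ_apply p - hθ

theorem exists_isSupportingHyperplane_not_linearIndependent (hΩo : IsOpen Ω) (hΩc : Convex ℝ Ω)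
    (hΩb : Bornology.IsBounded Ω) (hp : p ∈ Ω) (hq : q ∈ Ω) (hqp : q ≠ p) (hqH : fH q = cH)
    (hmin : ∀ h ∈ {x | fH x = cH} ∩ Ω,
      chordCrossRatio Ω p (q - p) ≤ chordCrossRatio Ω p (h - p)) :
    ∃ (fξ : E →ₗ[ℝ] ℝ) (cξ : ℝ) (fη : E →ₗ[ℝ] ℝ) (cη : ℝ),
      IsSupportingHyperplane Ω fξ cξ (p + sInf {t : ℝ | p + t • (q - p) ∈ Ω} • (q - p)) ∧
      IsSupportingHyperplane Ω fη cη (p + sSup {t : ℝ | p + t • (q - p) ∈ Ω} • (q - p)) ∧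
      ¬LinearIndependent ℝ ![(fξ, cξ), (fη, cη), (fH, cH)] := by
  have hr₁ := one_lt_chordCrossRatio hΩo hΩc hΩb hp (sub_ne_zero.2 hqp) (by simpa using hq)
  set r := chordCrossRatio Ω p (q - p)
  set G := gauge (-p +ᵥ Ω)
  have hG_smul (t : ℝ) (ht : 0 < t) (w : E) : G (t • w) = t * G w := gauge_smul_of_nonneg ht.le w
  have hG_nonneg : ∀ w, 0 ≤ G w := gauge_nonneg
  have hG_zero : G 0 = 0 := gauge_zero
  have hG_add : ∀ x y, G (x + y) ≤ G x + G y :=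
    gauge_add_le (hΩc.vadd _) (absorbent_neg_vadd_set hΩo hp)
  have hlevel (w : E) (hw : fH w = cH - fH p) : r - 1 ≤ G (-w) + r * G w :=
    sub_one_le_gauge_neg_add_mul_gauge hΩo hΩc hp hq hmin hw
  have hc : cH - fH p ≠ 0 := fun hc => by
    have := hlevel 0 (by simp [hc])
    rw [neg_zero, hG_zero, mul_zero, add_zero] at this
    linarith
  set θ := (r - 1) / (cH - fH p)
  have hkey (w : E) : (θ • fH) w ≤ G (-w) + r * G w := by
    rw [LinearMap.smul_apply, smul_eq_mul]
    refine div_mul_le_of_le_on_hyperplane (fun w => by nlinarith [hG_nonneg w, hG_nonneg (-w)])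
      (fun t ht w => ?_) hc (by linarith) hlevel w
    rw [← smul_neg, hG_smul t ht, hG_smul t ht]
    ring
  obtain ⟨φξ, φη, hφξ, hφη, hφ⟩ := exists_sub_eq_of_le_sublinear (N₂ := fun w => r * G w)
    hG_smul hG_add (fun t ht w => by rw [hG_smul t ht]; ring)
    (fun x y => by nlinarith [hG_add x y]) (θ • fH) hkey
  exact exists_isSupportingHyperplane_of_sub_eq_smul hΩo hΩc hΩb hp hq hqp hqH hφξ hφη hφ
    (div_mul_cancel₀ _ hc)

end Projection

open Filter MeasureTheory Metric Set in
/-- The pencil condition on `ξ`, `η`, `H` is encoded as the linear dependence of the pairs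
`(f, c)` defining them: a common direction, i.e. concurrence at infinity, is the parallel case. -/
theorem metric_projection_characterisation_general (n : ℕ) (Ω : Set (Euc n))
    (hΩopen : IsOpen Ω) (hΩconv : Convex ℝ Ω) (hΩbdd : Bornology.IsBounded Ω)
    (p : Euc n) (hp : p ∈ Ω)
    (fH : Euc n →ₗ[ℝ] ℝ) (cH : ℝ) (hfH : fH ≠ 0)
    (q : Euc n) (hq : q ∈ Ω) (hqH : fH q = cH) (hpq : q ≠ p) :
    (hilbertDist Ω p q =
        sInf (hilbertDist Ω p '' ({x : Euc n | fH x = cH} ∩ Ω))) ↔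
      ∃ (fξ : Euc n →ₗ[ℝ] ℝ) (cξ : ℝ) (fη : Euc n →ₗ[ℝ] ℝ) (cη : ℝ),
        fξ ≠ 0 ∧ fη ≠ 0 ∧
        fξ (p + sInf (lineParams Ω p q) • (q - p)) = cξ ∧
        (∀ z ∈ Ω, fξ z ≤ cξ) ∧
        fη (p + sSup (lineParams Ω p q) • (q - p)) = cη ∧
        (∀ z ∈ Ω, fη z ≤ cη) ∧
        ¬ LinearIndependent ℝ
          (![(fξ, cξ), (fη, cη), (fH, cH)] : Fin 3 → (Euc n →ₗ[ℝ] ℝ) × ℝ) := by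
  rw [hilbertDist_eq_sInf_image_iff hΩopen hΩconv hΩbdd hp inter_subset_right ⟨hqH, hq⟩]
  constructor
  · intro hmin
    obtain ⟨fξ, cξ, fη, cη, ⟨hξ₀, hξx, hξΩ⟩, ⟨hη₀, hηy, hηΩ⟩, hpencil⟩ :=
      exists_isSupportingHyperplane_not_linearIndependent hΩopen hΩconv hΩbdd hp hq hpq hqH hmin
    exact ⟨fξ, cξ, fη, cη, hξ₀, hη₀, hξx, hξΩ, hηy, hηΩ, hpencil⟩
  · rintro ⟨fξ, cξ, fη, cη, hξ₀, hη₀, hξx, hξΩ, hηy, hηΩ, hpencil⟩ h ⟨hhH, hh⟩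
    exact chordCrossRatio_le_of_isSupportingHyperplane_of_not_linearIndependent hΩopen hΩconv
      hΩbdd hp hq hpq hfH hqH ⟨hξ₀, hξx, hξΩ⟩ ⟨hη₀, hηy, hηΩ⟩ hpencil hh hhH

open Filter MeasureTheory Metric Set in
/-- **Metric projection onto a hyperplane in a Hilbert geometry.** Let `H = {x | f_H x = c_H}`
be a hyperplane meeting `Ω`, `p ∈ Ω` and `q ∈ H ∩ Ω` with `q ≠ p`. Then `q` realises the
distance from `p` to `H ∩ Ω` if and only if `Ω` admits supporting hyperplanes `ξ`, `η` at the
two points `x`, `y` where the line `(pq)` meets `∂Ω`, such that `ξ`, `η` and `H` belong to a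
common pencil, i.e. their projective closures contain a common `(n−2)`-dimensional projective
subspace. For hyperplanes `{fξ = cξ}`, `{fη = cη}`, `{f_H = c_H}` this pencil condition is
exactly the linear dependence of the three pairs `(fξ,cξ)`, `(fη,cη)`, `(f_H,c_H)` (a common
direction, i.e. concurrence at infinity, being the parallel case). -/
theorem metric_projection_characterisation (n : ℕ) (hn : 2 ≤ n) (Ω : Set (Euc n))
    (hΩopen : IsOpen Ω) (hΩconv : Convex ℝ Ω) (hΩbdd : Bornology.IsBounded Ω)
    (p : Euc n) (hp : p ∈ Ω)
    (fH : Euc n →ₗ[ℝ] ℝ) (cH : ℝ) (hfH : fH ≠ 0)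
    (q : Euc n) (hq : q ∈ Ω) (hqH : fH q = cH) (hpq : q ≠ p) :
    (hilbertDist Ω p q =
        sInf (hilbertDist Ω p '' ({x : Euc n | fH x = cH} ∩ Ω))) ↔
      ∃ (fξ : Euc n →ₗ[ℝ] ℝ) (cξ : ℝ) (fη : Euc n →ₗ[ℝ] ℝ) (cη : ℝ),
        fξ ≠ 0 ∧ fη ≠ 0 ∧
        fξ (p + sInf (lineParams Ω p q) • (q - p)) = cξ ∧
        (∀ z ∈ Ω, fξ z ≤ cξ) ∧
        fη (p + sSup (lineParams Ω p q) • (q - p)) = cη ∧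
        (∀ z ∈ Ω, fη z ≤ cη) ∧
        ¬ LinearIndependent ℝ
          (![(fξ, cξ), (fη, cη), (fH, cH)] : Fin 3 → (Euc n →ₗ[ℝ] ℝ) × ℝ) :=
  metric_projection_characterisation_general n Ω hΩopen hΩconv hΩbdd p hp fH cH hfH q hq hqH hpq
end

section
/- Let Ω ⊂ ℝ² be a bounded open convex set with Hilbert metric d_Ω, let o ∈ Ω, R > 0, and let p and q be the two points where a line through o meets the metric sphere S_Ω(o,R) = {x ∈ Ω : d_Ω(o,x) = R}. Let C be one of the two arcs of S_Ω(o,R) from p to q, and let p' ∈ Ω be a point on the ray from o through p. Then the function x ↦ d_Ω(p',x) is monotonic along C: if p, x, y, q occur in this order along C, then d_Ω(p',x) ≤ d_Ω(p',y). -/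
/-!
Let `w` be the point where the segment `[p', y]` crosses the ray from `o` through `x` (it exists
because `x` lies between `p` and `y` on the arc). Hilbert distances add along segments, so
`d(p', y) = d(p', w) + d(w, y)`, while `d(p', x) ≤ d(p', w) + d(w, x)` by the triangle
inequality. Finally `d(w, x) ≤ d(w, y)`: since `o`, `w`, `x` are collinear and
`d(o, x) = d(o, y)`, this is the triangle inequality through `o`.

The triangle inequality itself comes from affine functions positive on `Ω`: for any two of them
the ratio `φ(q) ψ(p) / (φ(p) ψ(q))` is at most `exp (2 d(p, q))`, with equality for the
functions vanishing at the two ends of the chord through `p` and `q`. Taking the pair that is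
extremal for `(p, r)` and multiplying the bounds for `(p, q)` and `(q, r)` gives
`d(p, r) ≤ d(p, q) + d(q, r)`.
-/

open Filter MeasureTheory Metric Set

open Filter MeasureTheory Metric Set

/-- The planar determinant (cross product) of two vectors of `ℝ²`. -/
noncomputable def det2 (u v : Euc 2) : ℝ := u 0 * v 1 - u 1 * v 0


section HilbertGeometry

variable {n : ℕ} {Ω : Set (Euc n)}

theorem exists_lineParams_eq_Ioo (hΩo : IsOpen Ω) (hΩc : Convex ℝ Ω)
    (hΩb : Bornology.IsBounded Ω) {p q : Euc n} (hp : p ∈ Ω) (hq : q ∈ Ω) (hpq : p ≠ q) :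
    ∃ a b : ℝ, a < 0 ∧ 1 < b ∧ lineParams Ω p q = Ioo a b := by
  have hline : lineParams Ω p q = AffineMap.lineMap p q ⁻¹' Ω := by
    ext t
    simp [lineParams, AffineMap.lineMap_apply_module', add_comm]
  set S := lineParams Ω p q
  have h0 : (0 : ℝ) ∈ S := by simpa [S, lineParams] using hp
  have h1 : (1 : ℝ) ∈ S := by simpa [S, lineParams] using hq
  have hSo : IsOpen S := hline ▸ hΩo.preimage AffineMap.lineMap_continuous
  have hSc : IsConnected S :=
    ⟨⟨0, h0⟩, (hline ▸ hΩc.affine_preimage (AffineMap.lineMap p q)).isPreconnected⟩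
  have hSb : Bornology.IsBounded S := by
    obtain ⟨M, hM⟩ := hΩb.subset_closedBall p
    refine (isBounded_closedBall (x := (0 : ℝ)) (r := M / dist p q)).subset fun t ht => ?_
    have := hM (hline ▸ ht : t ∈ AffineMap.lineMap p q ⁻¹' Ω)
    rw [mem_closedBall, dist_lineMap_left] at this
    rwa [mem_closedBall, dist_zero_right, le_div_iff₀ (dist_pos.2 hpq)]
  have hS : S = Ioo (sInf S) (sSup S) := by
    refine subset_antisymm (fun t ht => ⟨?_, ?_⟩)
      (hSc.Ioo_csInf_csSup_subset hSb.bddBelow hSb.bddAbove)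
    · obtain ⟨t', hlt, ht'⟩ := Filter.Eventually.exists_lt (hSo.mem_nhds ht)
      exact (csInf_le hSb.bddBelow ht').trans_lt hlt
    · obtain ⟨t', hlt, ht'⟩ := Filter.Eventually.exists_gt (hSo.mem_nhds ht)
      exact hlt.trans_le (le_csSup hSb.bddAbove ht')
  exact ⟨sInf S, sSup S, (hS ▸ h0).1, (hS ▸ h1).2, hS⟩

theorem lineParams_eq_preimage {p q x y : Euc n} {s t : ℝ} (hx : x = p + s • (q - p))
    (hy : y = p + t • (q - p)) :
    lineParams Ω x y = (fun r => s + r * (t - s)) ⁻¹' lineParams Ω p q := by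
  ext r
  have : x + r • (y - x) = p + (s + r * (t - s)) • (q - p) := by rw [hx, hy]; module
  simp only [lineParams, mem_preimage, mem_ofPred_eq, this]

theorem hilbertDist_eq_log_of_lt {p q x y : Euc n} {a b s t : ℝ} (hpq : p ≠ q)
    (hI : lineParams Ω p q = Ioo a b) (has : a < s) (hst : s < t) (htb : t < b)
    (hx : x = p + s • (q - p)) (hy : y = p + t • (q - p)) :
    hilbertDist Ω x y = Real.log ((t - a) * (b - s) / ((s - a) * (b - t))) / 2 := by
  have hts : 0 < t - s := sub_pos.2 hst
  have hxy : x ≠ y := by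
    rw [hx, hy]
    exact fun h => hst.ne (smul_left_injective ℝ (sub_ne_zero.2 hpq.symm) (add_left_cancel h))
  have hI' : lineParams Ω x y = Ioo ((a - s) / (t - s)) ((b - s) / (t - s)) := by
    ext r
    rw [lineParams_eq_preimage hx hy, hI, mem_preimage, mem_Ioo, mem_Ioo, div_lt_iff₀ hts,
      lt_div_iff₀ hts]
    constructor <;> rintro ⟨h₁, h₂⟩ <;> constructor <;> linarith
  have hlt : (a - s) / (t - s) < (b - s) / (t - s) := by gcongr; linarith
  rw [hilbertDist, if_neg hxy, hI', csInf_Ioo hlt, csSup_Ioo hlt, one_div_mul_eq_div]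
  have : s - a ≠ 0 := by linarith
  have : a - s ≠ 0 := by linarith
  have : b - t ≠ 0 := by linarith
  have : b - s - (t - s) ≠ 0 := by linarith
  have : t - s ≠ 0 := hts.ne'
  congr 2
  field_simp
  ring

theorem exp_two_mul_hilbertDist {p q : Euc n} {a b : ℝ} (hpq : p ≠ q)
    (hI : lineParams Ω p q = Ioo a b) (ha : a < 0) (hb : 1 < b) :
    Real.exp (2 * hilbertDist Ω p q) = (1 - a) * b / (-a * (b - 1)) := by
  rw [hilbertDist_eq_log_of_lt hpq hI ha one_pos hb (by simp) (by simp),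
    mul_div_cancel₀ _ two_ne_zero, Real.exp_log (by apply div_pos <;> apply mul_pos <;> linarith),
    sub_zero, zero_sub]

@[simp]
theorem hilbertDist_self (Ω : Set (Euc n)) (p : Euc n) : hilbertDist Ω p p = 0 := by
  simp [hilbertDist]

theorem hilbertDist_nonneg (hΩo : IsOpen Ω) (hΩc : Convex ℝ Ω) (hΩb : Bornology.IsBounded Ω)
    {p q : Euc n} (hp : p ∈ Ω) (hq : q ∈ Ω) : 0 ≤ hilbertDist Ω p q := by
  rcases eq_or_ne p q with rfl | hpq
  · simp
  obtain ⟨a, b, ha, hb, hI⟩ := exists_lineParams_eq_Ioo hΩo hΩc hΩb hp hq hpq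
  suffices 0 ≤ 2 * hilbertDist Ω p q by linarith
  rw [← Real.one_le_exp_iff, exp_two_mul_hilbertDist hpq hI ha hb,
    one_le_div (mul_pos (neg_pos.2 ha) (sub_pos.2 hb))]
  nlinarith

theorem hilbertDist_comm (hΩo : IsOpen Ω) (hΩc : Convex ℝ Ω) (hΩb : Bornology.IsBounded Ω)
    {p q : Euc n} (hp : p ∈ Ω) (hq : q ∈ Ω) : hilbertDist Ω p q = hilbertDist Ω q p := by
  rcases eq_or_ne p q with rfl | hpq
  · rfl
  obtain ⟨a, b, ha, hb, hI⟩ := exists_lineParams_eq_Ioo hΩo hΩc hΩb hp hq hpq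
  have hq' : q = p + (1 : ℝ) • (q - p) := by simp
  have hp' : p = p + (0 : ℝ) • (q - p) := by simp
  have hI' : lineParams Ω q p = Ioo (1 - b) (1 - a) := by
    ext r
    rw [lineParams_eq_preimage hq' hp', hI, mem_preimage, mem_Ioo, mem_Ioo]
    constructor <;> rintro ⟨h₁, h₂⟩ <;> constructor <;> linarith
  suffices Real.exp (2 * hilbertDist Ω p q) = Real.exp (2 * hilbertDist Ω q p) by simpa
  rw [exp_two_mul_hilbertDist hpq hI ha hb,
    exp_two_mul_hilbertDist hpq.symm hI' (by linarith) (by linarith)]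
  ring_nf

theorem hilbertDist_add_hilbertDist_of_mem_segment (hΩo : IsOpen Ω) (hΩc : Convex ℝ Ω)
    (hΩb : Bornology.IsBounded Ω) {p q w : Euc n} (hp : p ∈ Ω) (hq : q ∈ Ω)
    (hw : w ∈ segment ℝ p q) :
    hilbertDist Ω p w + hilbertDist Ω w q = hilbertDist Ω p q := by
  rw [segment_eq_image'] at hw
  obtain ⟨c, ⟨hc0, hc1⟩, rfl⟩ := hw
  rcases eq_or_ne p q with rfl | hpq
  · simp
  rcases hc0.eq_or_lt with rfl | hc0
  · simp
  rcases hc1.eq_or_lt with rfl | hc1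
  · simp
  obtain ⟨a, b, ha, hb, hI⟩ := exists_lineParams_eq_Ioo hΩo hΩc hΩb hp hq hpq
  rw [hilbertDist_eq_log_of_lt hpq hI ha hc0 (by linarith) (by simp) rfl,
    hilbertDist_eq_log_of_lt hpq hI (by linarith) hc1 hb rfl (by simp),
    hilbertDist_eq_log_of_lt hpq hI ha one_pos hb (by simp) (by simp), ← add_div,
    ← Real.log_mul (by apply ne_of_gt; apply div_pos <;> apply mul_pos <;> linarith)
      (by apply ne_of_gt; apply div_pos <;> apply mul_pos <;> linarith)]
  have : c - a ≠ 0 := by linarith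
  have : b - c ≠ 0 := by linarith
  congr 2
  field_simp

theorem lineParams_endpoints_mem_closure {p q : Euc n} {a b : ℝ}
    (hI : lineParams Ω p q = Ioo a b) (hab : a < b) :
    p + a • (q - p) ∈ closure Ω ∧ p + b • (q - p) ∈ closure Ω := by
  have himg : (fun t : ℝ => p + t • (q - p)) '' Icc a b ⊆ closure Ω := by
    rw [← closure_Ioo hab.ne]
    refine (image_closure_subset_closure_image (by fun_prop)).trans (closure_mono ?_)
    rintro _ ⟨t, ht, rfl⟩
    rw [← hI] at ht
    exact ht
  exact ⟨himg ⟨a, left_mem_Icc.2 hab.le, rfl⟩, himg ⟨b, right_mem_Icc.2 hab.le, rfl⟩⟩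

theorem mul_le_exp_two_mul_hilbertDist_mul (hΩo : IsOpen Ω) (hΩc : Convex ℝ Ω)
    (hΩb : Bornology.IsBounded Ω) {p q : Euc n} (hp : p ∈ Ω) (hq : q ∈ Ω)
    {f g : Euc n →L[ℝ] ℝ} {c d : ℝ} (hf : ∀ z ∈ Ω, f z < c) (hg : ∀ z ∈ Ω, g z < d) :
    (c - f q) * (d - g p) ≤ Real.exp (2 * hilbertDist Ω p q) * ((c - f p) * (d - g q)) := by
  rcases eq_or_ne p q with rfl | hpq
  · simp [mul_comm]
  obtain ⟨a, b, ha, hb, hI⟩ := exists_lineParams_eq_Ioo hΩo hΩc hΩb hp hq hpq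
  obtain ⟨hA, hB⟩ := lineParams_endpoints_mem_closure hI (by linarith)
  have hfA : f (p + a • (q - p)) ≤ c :=
    closure_minimal (fun z hz => (hf z hz).le) (isClosed_le f.continuous continuous_const) hA
  have hgB : g (p + b • (q - p)) ≤ d :=
    closure_minimal (fun z hz => (hg z hz).le) (isClosed_le g.continuous continuous_const) hB
  simp only [map_add, map_smul, map_sub, smul_eq_mul] at hfA hgB
  have hfp := sub_pos.2 (hf p hp)
  have hgp := sub_pos.2 (hg p hp)
  rw [exp_two_mul_hilbertDist hpq hI ha hb, div_mul_eq_mul_div,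
    le_div_iff₀ (mul_pos (neg_pos.2 ha) (sub_pos.2 hb))]
  have h₁ : -a * (c - f q) ≤ (1 - a) * (c - f p) := by linarith
  have h₂ : (b - 1) * (d - g p) ≤ b * (d - g q) := by linarith
  nlinarith [mul_le_mul h₁ h₂ (mul_nonneg (by linarith) hgp.le)
    (mul_nonneg (by linarith) hfp.le)]

theorem exists_exp_two_mul_hilbertDist_mul_eq (hΩo : IsOpen Ω) (hΩc : Convex ℝ Ω)
    (hΩb : Bornology.IsBounded Ω) {p q : Euc n} (hp : p ∈ Ω) (hq : q ∈ Ω) (hpq : p ≠ q) :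
    ∃ (f g : Euc n →L[ℝ] ℝ) (c d : ℝ), (∀ z ∈ Ω, f z < c) ∧ (∀ z ∈ Ω, g z < d) ∧
      Real.exp (2 * hilbertDist Ω p q) * ((c - f p) * (d - g q)) = (c - f q) * (d - g p) := by
  obtain ⟨a, b, ha, hb, hI⟩ := exists_lineParams_eq_Ioo hΩo hΩc hΩb hp hq hpq
  have hA : p + a • (q - p) ∉ Ω := fun h => lt_irrefl a (show a ∈ Ioo a b from hI ▸ h).1
  have hB : p + b • (q - p) ∉ Ω := fun h => lt_irrefl b (show b ∈ Ioo a b from hI ▸ h).2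
  obtain ⟨f, hf⟩ := geometric_hahn_banach_open_point hΩc hΩo hA
  obtain ⟨g, hg⟩ := geometric_hahn_banach_open_point hΩc hΩo hB
  refine ⟨f, g, _, _, hf, hg, ?_⟩
  rw [exp_two_mul_hilbertDist hpq hI ha hb]
  simp only [map_add, map_smul, map_sub, smul_eq_mul]
  have : a ≠ 0 := ha.ne
  have : b - 1 ≠ 0 := by linarith
  field_simp
  ring

theorem hilbertDist_triangle (hΩo : IsOpen Ω) (hΩc : Convex ℝ Ω) (hΩb : Bornology.IsBounded Ω)
    {p q r : Euc n} (hp : p ∈ Ω) (hq : q ∈ Ω) (hr : r ∈ Ω) :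
    hilbertDist Ω p r ≤ hilbertDist Ω p q + hilbertDist Ω q r := by
  rcases eq_or_ne p r with rfl | hpr
  · rw [hilbertDist_self]
    exact add_nonneg (hilbertDist_nonneg hΩo hΩc hΩb hp hq)
      (hilbertDist_nonneg hΩo hΩc hΩb hq hp)
  obtain ⟨f, g, c, d, hf, hg, hpr⟩ :=
    exists_exp_two_mul_hilbertDist_mul_eq hΩo hΩc hΩb hp hr hpr
  have hpq := mul_le_exp_two_mul_hilbertDist_mul hΩo hΩc hΩb hp hq hf hg
  have hqr := mul_le_exp_two_mul_hilbertDist_mul hΩo hΩc hΩb hq hr hf hg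
  have hf' : ∀ z ∈ Ω, 0 < c - f z := fun z hz => sub_pos.2 (hf z hz)
  have hg' : ∀ z ∈ Ω, 0 < d - g z := fun z hz => sub_pos.2 (hg z hz)
  suffices Real.exp (2 * hilbertDist Ω p r) ≤
      Real.exp (2 * hilbertDist Ω p q) * Real.exp (2 * hilbertDist Ω q r) by
    rw [← Real.exp_add, Real.exp_le_exp] at this
    linarith
  have hK : 0 < (c - f p) * (d - g r) * ((c - f q) * (d - g q)) := by
    have := hf' p hp; have := hg' r hr; have := hf' q hq; have := hg' q hq
    positivity
  refine le_of_mul_le_mul_right ?_ hK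
  calc Real.exp (2 * hilbertDist Ω p r) * ((c - f p) * (d - g r) * ((c - f q) * (d - g q)))
      = ((c - f q) * (d - g p)) * ((c - f r) * (d - g q)) := by rw [← mul_assoc, hpr]; ring
    _ ≤ (Real.exp (2 * hilbertDist Ω p q) * ((c - f p) * (d - g q))) *
          (Real.exp (2 * hilbertDist Ω q r) * ((c - f q) * (d - g r))) :=
        mul_le_mul hpq hqr (mul_pos (hf' r hr) (hg' q hq)).le
          (mul_nonneg (Real.exp_pos _).le (mul_pos (hf' p hp) (hg' q hq)).le)
    _ = Real.exp (2 * hilbertDist Ω p q) * Real.exp (2 * hilbertDist Ω q r) *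
          ((c - f p) * (d - g r) * ((c - f q) * (d - g q))) := by ring

theorem hilbertDist_le_of_mem_ray (hΩo : IsOpen Ω) (hΩc : Convex ℝ Ω)
    (hΩb : Bornology.IsBounded Ω) {o w x y : Euc n} (ho : o ∈ Ω) (hw : w ∈ Ω) (hx : x ∈ Ω)
    (hy : y ∈ Ω) {τ : ℝ} (hτ : 0 ≤ τ) (hwx : w = o + τ • (x - o))
    (hxy : hilbertDist Ω o x = hilbertDist Ω o y) :
    hilbertDist Ω w x ≤ hilbertDist Ω w y := by
  rcases le_total τ 1 with hτ1 | hτ1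
  · have hseg : w ∈ segment ℝ o x := by
      rw [segment_eq_image']
      exact ⟨τ, ⟨hτ, hτ1⟩, hwx.symm⟩
    have h₁ := hilbertDist_add_hilbertDist_of_mem_segment hΩo hΩc hΩb ho hx hseg
    have h₂ := hilbertDist_triangle hΩo hΩc hΩb ho hw hy
    linarith
  · have hseg : x ∈ segment ℝ o w := by
      rw [segment_eq_image']
      refine ⟨τ⁻¹, ⟨inv_nonneg.2 hτ, inv_le_one_of_one_le₀ hτ1⟩, ?_⟩
      simp only [hwx, add_sub_cancel_left, smul_smul, inv_mul_cancel₀ (by linarith : τ ≠ 0),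
        one_smul, add_sub_cancel]
    have h₁ := hilbertDist_add_hilbertDist_of_mem_segment hΩo hΩc hΩb ho hw hseg
    have h₂ := hilbertDist_triangle hΩo hΩc hΩb ho hy hw
    rw [hilbertDist_comm hΩo hΩc hΩb hw hx, hilbertDist_comm hΩo hΩc hΩb hw hy]
    linarith

end HilbertGeometry

theorem exists_eq_smul_of_det2_eq_zero {u v : Euc 2} (hu : u ≠ 0) (h : det2 u v = 0) :
    ∃ τ : ℝ, v = τ • u := by
  unfold det2 at h
  by_cases h0 : u 0 = 0
  · have h1 : u 1 ≠ 0 := fun h1 => hu (by ext i; fin_cases i <;> simp [h0, h1])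
    have hv0 : v 0 = 0 := by simpa [h0, h1] using h
    refine ⟨v 1 / u 1, ?_⟩
    ext i
    fin_cases i <;> simp [h0, hv0, h1]
  · refine ⟨v 0 / u 0, ?_⟩
    ext i
    fin_cases i <;> simp [h0]
    field_simp
    linear_combination h

theorem exists_mem_segment_eq_add_smul {o p x y p' : Euc 2} {s : ℝ} (hs : 0 ≤ s)
    (hp' : p' = o + s • (p - o)) (hx : 0 < det2 (p - o) (x - o))
    (hy : 0 ≤ det2 (p - o) (y - o)) (hxy : 0 ≤ det2 (x - o) (y - o)) :
    ∃ w ∈ segment ℝ p' y, ∃ τ : ℝ, 0 ≤ τ ∧ w = o + τ • (x - o) := by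
  subst hp'
  set F : ℝ → ℝ := fun c =>
    det2 (x - o) (o + s • (p - o) + c • (y - (o + s • (p - o))) - o)
  have hF : ∀ c, F c = (1 - c) * (-s * det2 (p - o) (x - o)) + c * det2 (x - o) (y - o) := by
    intro c
    simp only [F, det2, PiLp.add_apply, PiLp.sub_apply, PiLp.smul_apply, smul_eq_mul]
    ring
  obtain ⟨c, ⟨hc0, hc1⟩, hFc⟩ : ∃ c ∈ Icc (0 : ℝ) 1, F c = 0 := by
    refine intermediate_value_Icc zero_le_one ?_ ⟨?_, ?_⟩
    · rw [funext hF]; fun_prop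
    · rw [hF]; nlinarith
    · rw [hF]; linarith
  set w := o + s • (p - o) + c • (y - (o + s • (p - o)))
  have hxo : x - o ≠ 0 := fun h => by simp [h, det2] at hx
  obtain ⟨τ, hτ⟩ := exists_eq_smul_of_det2_eq_zero hxo hFc
  have hwseg : w ∈ segment ℝ (o + s • (p - o)) y := by
    rw [segment_eq_image']
    exact ⟨c, ⟨hc0, hc1⟩, rfl⟩
  refine ⟨w, hwseg, τ, ?_, eq_add_of_sub_eq' hτ⟩
  have hw : det2 (p - o) (w - o) = c * det2 (p - o) (y - o) := by
    simp only [w, det2, PiLp.add_apply, PiLp.sub_apply, PiLp.smul_apply, smul_eq_mul]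
    ring
  have hτx : det2 (p - o) (w - o) = τ * det2 (p - o) (x - o) := by
    rw [hτ]
    simp only [det2, PiLp.smul_apply, smul_eq_mul]
    ring
  exact (mul_nonneg_iff_of_pos_right hx).1 (hτx ▸ hw ▸ mul_nonneg hc0 hy)

/-- The signs of `det2` encode the configuration: `x` and `y` lie on the arc to the left of the
ray from `o` through `p`, in the order `p, x, y` along it. -/
theorem sphere_dist_monotonic_general (Ω : Set (Euc 2))
    (hΩopen : IsOpen Ω) (hΩconv : Convex ℝ Ω) (hΩbdd : Bornology.IsBounded Ω)
    (o : Euc 2) (ho : o ∈ Ω) (R : ℝ)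
    (p x y p' : Euc 2)
    (hx : x ∈ Ω) (hy : y ∈ Ω) (hp' : p' ∈ Ω)
    (hxS : hilbertDist Ω o x = R) (hyS : hilbertDist Ω o y = R)
    (hxside : 0 < det2 (p - o) (x - o)) (hyside : 0 < det2 (p - o) (y - o))
    (horder : 0 ≤ det2 (x - o) (y - o))
    (hray : ∃ s : ℝ, 0 ≤ s ∧ p' = o + s • (p - o)) :
    hilbertDist Ω p' x ≤ hilbertDist Ω p' y := by
  obtain ⟨s, hs, hp's⟩ := hray
  obtain ⟨w, hw, τ, hτ, hwx⟩ :=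
    exists_mem_segment_eq_add_smul hs hp's hxside hyside.le horder
  have hwΩ : w ∈ Ω := hΩconv.segment_subset hp' hy hw
  calc hilbertDist Ω p' x ≤ hilbertDist Ω p' w + hilbertDist Ω w x :=
        hilbertDist_triangle hΩopen hΩconv hΩbdd hp' hwΩ hx
    _ ≤ hilbertDist Ω p' w + hilbertDist Ω w y := by
        gcongr
        exact hilbertDist_le_of_mem_ray hΩopen hΩconv hΩbdd ho hwΩ hx hy hτ hwx
          (hxS.trans hyS.symm)
    _ = hilbertDist Ω p' y :=
        hilbertDist_add_hilbertDist_of_mem_segment hΩopen hΩconv hΩbdd hp' hy hw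

/-- **Monotonicity of the distance to a point along a metric sphere** in a plane Hilbert
geometry. Let `p`, `q` be the two points where a line through `o` meets the sphere
`S_Ω(o,R)`, let `x`, `y` be points of the sphere lying on one of the two arcs `C` from `p`
to `q` (the side of the line `(pq)` containing them being fixed by `det2 (p-o) (·-o) > 0`)
with `p, x, y, q` in this order along `C` (encoded by `det2 (x-o) (y-o) ≥ 0`), and let `p'`
be a point of `Ω` on the ray from `o` through `p`. Then `d_Ω(p',x) ≤ d_Ω(p',y)`. -/
theorem sphere_dist_monotonic (Ω : Set (Euc 2))
    (hΩopen : IsOpen Ω) (hΩconv : Convex ℝ Ω) (hΩbdd : Bornology.IsBounded Ω)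
    (o : Euc 2) (ho : o ∈ Ω) (R : ℝ) (hR : 0 < R)
    (p q x y p' : Euc 2)
    (hp : p ∈ Ω) (hq : q ∈ Ω) (hx : x ∈ Ω) (hy : y ∈ Ω) (hp' : p' ∈ Ω)
    (hpS : hilbertDist Ω o p = R) (hqS : hilbertDist Ω o q = R)
    (hxS : hilbertDist Ω o x = R) (hyS : hilbertDist Ω o y = R)
    (hline : ∃ t : ℝ, t < 0 ∧ q - o = t • (p - o))
    (hxside : 0 < det2 (p - o) (x - o)) (hyside : 0 < det2 (p - o) (y - o))
    (horder : 0 ≤ det2 (x - o) (y - o))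
    (hray : ∃ s : ℝ, 0 ≤ s ∧ p' = o + s • (p - o)) :
    hilbertDist Ω p' x ≤ hilbertDist Ω p' y :=
  sphere_dist_monotonic_general Ω hΩopen hΩconv hΩbdd o ho R p x y p' hx hy hp' hxS hyS hxside
    hyside horder hray
end
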